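/- arXiv:1507.02602 — 4 statements merged into one kernel-verified Lean document; each statement's English description precedes it below -/
import Mathlib

section
/- Let (X,r) be a non-degenerate symmetric set with |X| ≥ 2 satisfying condition (*), and let m ≥ 1. Then the following two identities are equivalent: (A) for all a,b,y₁,…,y_m ∈ X: (⋯((a ◁ y_m) ◁ y_{m−1}) ◁ ⋯ ◁ y₂) ◁ y₁ = (⋯((b ◁ y_m) ◁ y_{m−1}) ◁ ⋯ ◁ y₂) ◁ y₁; (B) for all x,y₁,…,y_m ∈ X: ((⋯((y_m ◁ y_{m−1}) ◁ y_{m−2}) ◁ ⋯ ◁ y₂) ◁ y₁) ◁ x = ((⋯(y_{m−1} ◁ y_{m−2}) ◁ ⋯ ◁ y₂) ◁ y₁) ◁ x. -/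
/-- The map `r(x,y) = (ˣy, xʸ)` built from a left action and a right action
(`lact x y = ˣy`, `ract x y = xʸ`). -/
def ybR {X : Type*} (lact ract : X → X → X) : X × X → X × X :=
  fun p => (lact p.1 p.2, ract p.1 p.2)

/-- `r¹² = r × id` acting on triples. -/
def ybR12 {X : Type*} (r : X × X → X × X) : X × X × X → X × X × X :=
  fun p => ((r (p.1, p.2.1)).1, (r (p.1, p.2.1)).2, p.2.2)

/-- `r²³ = id × r` acting on triples. -/
def ybR23 {X : Type*} (r : X × X → X × X) : X × X × X → X × X × X :=
  fun p => (p.1, r p.2)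

/-- A non-degenerate symmetric set `(X,r)`, `r(x,y) = (ˣy, xʸ)`:
a non-degenerate involutive braided set, i.e. a set-theoretic solution of
the Yang–Baxter equation.  Involutivity `r ∘ r = id` is encoded componentwise
as `^(ˣy)(xʸ) = x` and `(ˣy)^(xʸ) = y`. -/
structure SymmetricSet (X : Type*) where
  /-- the left action `(x,y) ↦ ˣy` -/
  lact : X → X → X
  /-- the right action `(x,y) ↦ xʸ` -/
  ract : X → X → X
  nondegL : ∀ x : X, Function.Bijective (lact x)
  nondegR : ∀ y : X, Function.Bijective (fun x => ract x y)
  invl : ∀ x y : X, lact (lact x y) (ract x y) = x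
  invr : ∀ x y : X, ract (lact x y) (ract x y) = y
  braid : ybR12 (ybR lact ract) ∘ ybR23 (ybR lact ract) ∘ ybR12 (ybR lact ract)
        = ybR23 (ybR lact ract) ∘ ybR12 (ybR lact ract) ∘ ybR23 (ybR lact ract)

/-- The tower of actions `actTower lact x [y₁, …, y_m] =
`((⋯(y_m ◁ y_{m−1}) ◁ ⋯ ◁ y₂) ◁ y₁) ◁ x`, where `α ◁ z := ^(α)z = lact α z`;
for the empty list it is `x` itself. -/
def actTower {X : Type*} (lact : X → X → X) : X → List X → X
  | x, [] => x
  | x, y :: ys => lact (actTower lact y ys) x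

lemma actTower_merge {X : Type*} (lact : X → X → X) :
    ∀ (L : List X) (y a x : X),
      actTower lact x (L ++ [y, a]) = actTower lact x (L ++ [lact a y])
  | [], y, a, x => by simp [actTower]
  | z :: L, y, a, x => by
      simp only [List.cons_append, actTower, List.append_eq]
      rw [actTower_merge lact L y a z]

lemma foldl_actTower {X : Type*} (lact : X → X → X) :
    ∀ (ys : List X) (a x : X),
      lact (ys.foldl lact a) x = actTower lact x (ys.reverse ++ [a])
  | [], a, x => by simp [actTower]
  | y :: ys, a, x => by
      simp only [List.foldl_cons, List.reverse_cons, List.append_assoc,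
        List.cons_append, List.nil_append]
      rw [foldl_actTower lact ys (lact a y) x, ← actTower_merge]

/-- For a non-degenerate symmetric set `(X,r)` with `|X| ≥ 2`
satisfying condition (*), and `m ≥ 1`, the identity (A)
`(⋯((a ◁ y_m) ◁ y_{m−1}) ◁ ⋯) ◁ y₁ = (⋯((b ◁ y_m) ◁ y_{m−1}) ◁ ⋯) ◁ y₁`
(for all `a, b` and all `y₁,…,y_m`, expressed as a fold over lists of length
`m`) is equivalent to the identity (B)
`((⋯((y_m ◁ y_{m−1}) ◁ ⋯) ◁ y₁) ◁ x = ((⋯(y_{m−1} ◁ y_{m−2}) ◁ ⋯) ◁ y₁) ◁ x`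
(for all `x` and all `y₁,…,y_m`, expressed via `actTower`). -/
theorem tower_identities_equivalent {X : Type*} [Nontrivial X]
    (S : SymmetricSet X)
    (hstar : ∀ x : X, ∃ a : X, S.lact a x = x)
    (m : ℕ) (hm : 1 ≤ m) :
    (∀ (a b : X) (ys : List X), ys.length = m →
        ys.foldl S.lact a = ys.foldl S.lact b) ↔
    (∀ (x : X) (ys : List X), ys.length = m →
        actTower S.lact x ys = actTower S.lact x ys.dropLast) := by
  constructor
  · intro hA x ys hlen
    obtain ⟨ws, a, rfl⟩ : ∃ ws a, ys = ws ++ [a] := by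
      rcases List.eq_nil_or_concat ys with h | ⟨ws, a, h⟩
      · subst h; simp at hlen; omega
      · exact ⟨ws, a, by simpa using h⟩
    rw [List.dropLast_concat]
    have hws : ws = ws.reverse.reverse := (List.reverse_reverse ws).symm
    rcases hzs : ws.reverse with _ | ⟨u, zs'⟩
    · have hwnil : ws = [] := by rw [hws, hzs]; rfl
      subst hwnil
      have hm1 : m = 1 := by simpa using hlen.symm
      obtain ⟨b, hb⟩ := hstar x
      have := hA a b [x] (by simp [hm1])
      simp only [List.foldl_cons, List.foldl_nil] at this
      simpa [actTower] using this.trans hb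
    · have hw : ws = zs'.reverse ++ [u] := by
        rw [hws, hzs]; simp
      obtain ⟨b, hb⟩ := hstar u
      have hlen' : (ws.reverse ++ [x]).length = m := by
        simp at hlen ⊢; omega
      have key := hA a b (ws.reverse ++ [x]) hlen'
      rw [List.foldl_append, List.foldl_append] at key
      simp only [List.foldl_cons, List.foldl_nil] at key
      -- LHS: actTower x (ws ++ [a]) = lact (foldl lact a ws.reverse) x
      have e1 : actTower S.lact x (ws ++ [a])
          = S.lact (ws.reverse.foldl S.lact a) x := by
        rw [foldl_actTower S.lact ws.reverse a x, List.reverse_reverse]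
      -- RHS: actTower x ws = lact (foldl lact u zs') x
      have e2 : actTower S.lact x ws
          = S.lact (zs'.foldl S.lact u) x := by
        rw [foldl_actTower S.lact zs' u x, ← hw]
      rw [e1, e2, key, hzs]
      simp only [List.foldl_cons, hb]
  · intro hB a b ys hlen
    obtain ⟨ws, z, rfl⟩ : ∃ ws z, ys = ws ++ [z] := by
      rcases List.eq_nil_or_concat ys with h | ⟨ws, z, h⟩
      · subst h; simp at hlen; omega
      · exact ⟨ws, z, by simpa using h⟩
    rw [List.foldl_append, List.foldl_append]
    simp only [List.foldl_cons, List.foldl_nil]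
    have hlen' : ∀ c : X, (ws.reverse ++ [c]).length = m := by
      intro c; simp at hlen ⊢; omega
    rw [foldl_actTower S.lact ws a z, foldl_actTower S.lact ws b z,
      hB z (ws.reverse ++ [a]) (hlen' a), hB z (ws.reverse ++ [b]) (hlen' b),
      List.dropLast_concat, List.dropLast_concat]
end

section
/- Let (X,r) be a nontrivial non-degenerate symmetric set with |X| ≥ 2. Then the following two conditions are equivalent: (i) L_(ˣa) = L_a for all a,x ∈ X (i.e. ^(ˣa)z = ᵃz for all a,x,z ∈ X); (ii) L_(aˣ) = L_a for all a,x ∈ X. Moreover, each of these conditions implies condition lri: (ˣy)ˣ = y = ˣ(yˣ) for all x,y ∈ X. -/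
/-- For a nontrivial non-degenerate symmetric set `(X,r)` with
`|X| ≥ 2`, the conditions (i) `L_(ˣa) = L_a` for all `a,x` and
(ii) `L_(aˣ) = L_a` for all `a,x` are equivalent, and each of them implies
condition lri: `(ˣy)ˣ = y = ˣ(yˣ)` for all `x,y`. -/
theorem lact_invariance_equiv_and_lri {X : Type*} [Nontrivial X]
    (S : SymmetricSet X)
    (hnontriv : ∃ x y : X, S.lact x y ≠ y) :
    ((∀ a x : X, S.lact (S.lact x a) = S.lact a) ↔
      (∀ a x : X, S.lact (S.ract a x) = S.lact a)) ∧
    ((∀ a x : X, S.lact (S.lact x a) = S.lact a) →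
      ∀ x y : X, S.ract (S.lact x y) x = y ∧ S.lact x (S.ract y x) = y) ∧
    ((∀ a x : X, S.lact (S.ract a x) = S.lact a) →
      ∀ x y : X, S.ract (S.lact x y) x = y ∧ S.lact x (S.ract y x) = y) := by
  -- (ii) ⇒ (i)
  have two_one : (∀ a x : X, S.lact (S.ract a x) = S.lact a) →
      (∀ a x : X, S.lact (S.lact x a) = S.lact a) := by
    intro h2 a x
    have := h2 (S.lact x a) (S.ract x a)
    rw [S.invr x a] at this; exact this.symm
  -- (i) ⇒ lri
  have one_lri : (∀ a x : X, S.lact (S.lact x a) = S.lact a) →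
      ∀ x y : X, S.ract (S.lact x y) x = y ∧ S.lact x (S.ract y x) = y := by
    intro h1
    have hid : ∀ x y : X, S.lact y (S.ract x y) = x := by
      intro x y
      have := S.invl x y
      rwa [congrFun (h1 y x) (S.ract x y)] at this
    intro x y
    refine ⟨?_, hid y x⟩
    have hinj := (S.nondegL x).1
    apply hinj
    rw [hid (S.lact x y) x]
  -- (i) ⇒ (ii)
  have one_two : (∀ a x : X, S.lact (S.lact x a) = S.lact a) →
      (∀ a x : X, S.lact (S.ract a x) = S.lact a) := by
    intro h1 a x
    have := h1 (S.ract a x) (S.lact a x)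
    rw [S.invl a x] at this; exact this.symm
  exact ⟨⟨one_two, two_one⟩, one_lri, fun h2 => one_lri (two_one h2)⟩
end

section
/- Let (X,r) be a non-degenerate symmetric set and let 𝒢 be the subgroup of Sym(X) generated by {L_x : x ∈ X}; the orbits of 𝒢 on X coincide with the G(X,r)-orbits. Suppose that on each orbit the induced solution is trivial or a one-element solution, i.e. ᵇa = a whenever a,b lie in the same orbit. Then: (1) for all y ∈ X and all a,b in the same orbit, ^(ᵇy)a = ʸa, ^(yᵇ)a = ʸa, a^(yᵇ) = aʸ, and a^(ᵇy) = aʸ; and (2) (X,r) satisfies condition lri: (ˣy)ˣ = y = ˣ(yˣ) for all x,y ∈ X. (Consequently X is a strong twisted union of its orbits.) -/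
/-- The permutation `L_x` of `X` determined by the (bijective) left action of `x`. -/
noncomputable def permOf {X : Type*} (S : SymmetricSet X) (x : X) : Equiv.Perm X :=
  Equiv.ofBijective (S.lact x) (S.nondegL x)

/-- The permutation group `𝒢 = 𝒢(X,r) ≤ Sym(X)` generated by `{L_x : x ∈ X}`. -/
noncomputable def permGroup {X : Type*} (S : SymmetricSet X) : Subgroup (Equiv.Perm X) :=
  Subgroup.closure (Set.range (permOf S))

/-- `a` and `b` lie in the same `𝒢`-orbit of `X` (equivalently the same
`G(X,r)`-orbit). -/
def sameOrbit {X : Type*} (S : SymmetricSet X) (a b : X) : Prop :=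
  ∃ g ∈ permGroup S, g a = b

section Aux

variable {X : Type*} (S : SymmetricSet X)

lemma sameOrbit_refl (a : X) : sameOrbit S a a := ⟨1, one_mem _, rfl⟩

lemma sameOrbit_symm {a b : X} (h : sameOrbit S a b) : sameOrbit S b a := by
  obtain ⟨g, hg, hga⟩ := h
  exact ⟨g⁻¹, inv_mem hg, by simp [← hga]⟩

lemma sameOrbit_trans {a b c : X} (h1 : sameOrbit S a b) (h2 : sameOrbit S b c) :
    sameOrbit S a c := by
  obtain ⟨g, hg, hga⟩ := h1
  obtain ⟨g', hg', hg'b⟩ := h2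
  exact ⟨g' * g, mul_mem hg' hg, by simp [hga, hg'b]⟩

lemma sameOrbit_lact (x a : X) : sameOrbit S a (S.lact x a) :=
  ⟨permOf S x, Subgroup.subset_closure ⟨x, rfl⟩, rfl⟩

lemma braid1 (x y z : X) :
    S.lact (S.lact x y) (S.lact (S.ract x y) z) = S.lact x (S.lact y z) := by
  have := congrArg (fun f => (f (x, y, z)).1) S.braid
  simpa [ybR12, ybR23, ybR, Function.comp] using this

variable (horb : ∀ a b : X, sameOrbit S a b → S.lact b a = a)
include horb

lemma lact_self (x : X) : S.lact x x = x := horb x x (sameOrbit_refl S x)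

/-- key identity: `ʸ(xʸ) = x`. -/
lemma lact_ract_cancel (x y : X) : S.lact y (S.ract x y) = x := by
  obtain ⟨a, ha⟩ := (S.nondegL y).2 x
  have h2 : S.lact (S.lact x y) (S.lact (S.ract x y) a) = x := by
    rw [braid1, ha, lact_self S horb]
  have h4 : S.lact (S.ract x y) a = S.ract x y :=
    (S.nondegL (S.lact x y)).1 (h2.trans (S.invl x y).symm)
  have hoa : sameOrbit S a (S.ract x y) := by
    have o1 : sameOrbit S a x := by
      have := sameOrbit_lact S y a; rwa [ha] at this
    have o2 : sameOrbit S (S.ract x y) x := by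
      have := sameOrbit_lact S (S.lact x y) (S.ract x y); rwa [S.invl x y] at this
    exact sameOrbit_trans S o1 (sameOrbit_symm S o2)
  have h5 : S.lact (S.ract x y) a = a := horb a _ hoa
  have : S.ract x y = a := h4.symm.trans h5
  rw [this]; exact ha

lemma e1 {a b : X} (hab : sameOrbit S a b) (y : X) :
    S.lact (S.lact b y) a = S.lact y a := by
  have hb1 : S.lact (S.ract b y) a = a := by
    have o : sameOrbit S (S.ract b y) b := by
      have := sameOrbit_lact S y (S.ract b y); rwa [lact_ract_cancel S horb b y] at this
    exact horb a (S.ract b y) (sameOrbit_trans S hab (sameOrbit_symm S o))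
  have hb2 : S.lact b (S.lact y a) = S.lact y a :=
    horb (S.lact y a) b (sameOrbit_trans S (sameOrbit_symm S (sameOrbit_lact S y a)) hab)
  calc S.lact (S.lact b y) a
      = S.lact (S.lact b y) (S.lact (S.ract b y) a) := by rw [hb1]
    _ = S.lact b (S.lact y a) := braid1 S b y a
    _ = S.lact y a := hb2

lemma e2 {a b : X} (hab : sameOrbit S a b) (y : X) :
    S.lact (S.ract y b) a = S.lact y a := by
  have := e1 S horb hab (S.ract y b)
  rw [lact_ract_cancel S horb] at this
  exact this.symm

end Aux

/-- Let `(X,r)` be a non-degenerate symmetric set such that on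
each orbit of the permutation group `𝒢 = ⟨L_x : x ∈ X⟩` the induced solution is
trivial (or a one-element solution), i.e. `ᵇa = a` whenever `a,b` lie in the
same orbit.  Then (1) for all `y` and all `a,b` in the same orbit one has
`^(ᵇy)a = ʸa`, `^(yᵇ)a = ʸa`, `a^(yᵇ) = aʸ` and `a^(ᵇy) = aʸ`; and
(2) `(X,r)` satisfies condition lri. -/
theorem trivial_orbits_imply_stu_and_lri {X : Type*} (S : SymmetricSet X)
    (horb : ∀ a b : X, sameOrbit S a b → S.lact b a = a) :
    (∀ (y a b : X), sameOrbit S a b →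
      S.lact (S.lact b y) a = S.lact y a ∧
      S.lact (S.ract y b) a = S.lact y a ∧
      S.ract a (S.ract y b) = S.ract a y ∧
      S.ract a (S.lact b y) = S.ract a y) ∧
    (∀ x y : X, S.ract (S.lact x y) x = y ∧ S.lact x (S.ract y x) = y) := by
  have P := lact_ract_cancel S horb
  constructor
  · intro y a b hab
    have hc : S.lact y (S.ract a y) = a := P a y
    have hcb : sameOrbit S (S.ract a y) b := by
      have o : sameOrbit S (S.ract a y) a := by
        have := sameOrbit_lact S y (S.ract a y); rwa [hc] at this
      exact sameOrbit_trans S o hab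
    refine ⟨e1 S horb hab y, e2 S horb hab y, ?_, ?_⟩
    · apply (S.nondegL (S.ract y b)).1
      rw [P a (S.ract y b), e2 S horb hcb y, hc]
    · apply (S.nondegL (S.lact b y)).1
      rw [P a (S.lact b y), e1 S horb hcb y, hc]
  · intro x y
    refine ⟨(S.nondegL x).1 ?_, P y x⟩
    rw [P (S.lact x y) x]
end

section
/- Let (X,r) be a non-degenerate symmetric set of arbitrary cardinality. Then (X,r) satisfies condition lri if and only if it satisfies the cyclic conditions cc, i.e. all four identities cl1: ^(yˣ)x = ʸx, cr1: x^(ˣy) = xʸ, cl2: ^(ˣy)x = ʸx, cr2: x^(yˣ) = xʸ, for all x,y ∈ X. -/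
/-- A non-degenerate symmetric set `(X,r)` satisfies condition lri
(`(ˣy)ˣ = y = ˣ(yˣ)`) if and only if it satisfies the cyclic conditions cc:
cl1: `^(yˣ)x = ʸx`, cr1: `x^(ˣy) = xʸ`, cl2: `^(ˣy)x = ʸx`, cr2: `x^(yˣ) = xʸ`. -/
theorem lri_iff_cyclic_conditions {X : Type*} (S : SymmetricSet X) :
    (∀ x y : X, S.ract (S.lact x y) x = y ∧ S.lact x (S.ract y x) = y) ↔
    (∀ x y : X,
      S.lact (S.ract y x) x = S.lact y x ∧
      S.ract x (S.lact x y) = S.ract x y ∧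
      S.lact (S.lact x y) x = S.lact y x ∧
      S.ract x (S.ract y x) = S.ract x y) := by
  constructor
  · intro h x y
    -- cl1
    have cl1 : ∀ x y : X, S.lact (S.ract y x) x = S.lact y x := by
      intro x y
      have h1 := (h (S.ract y x) (S.lact y x)).2
      rwa [S.invr y x] at h1
    -- cr1
    have cr1 : ∀ x y : X, S.ract x (S.lact x y) = S.ract x y := by
      intro x y
      have h1 := (h (S.lact x y) (S.ract x y)).1
      rwa [S.invl x y] at h1
    refine ⟨cl1 x y, cr1 x y, ?_, ?_⟩
    · have h1 := cl1 x (S.lact x y)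
      rw [(h x y).1] at h1; exact h1.symm
    · have h1 := cr1 x (S.ract y x)
      rw [(h x y).2] at h1; exact h1.symm
  · intro hc x y
    constructor
    · have cr2' := (hc (S.lact x y) x).2.2.2
      rw [(hc x y).2.1, S.invr x y] at cr2'
      exact cr2'.symm
    · have cl2' := (hc (S.ract y x) x).2.2.1
      rw [(hc x y).1, S.invl y x] at cl2'
      exact cl2'.symm
end
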